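/- arXiv:2004.11554 — 2 statements merged into one kernel-verified Lean document; each statement's English description precedes it below -/
import Mathlib

section
/- Let Y = Xβ* + ε with X an n×p real matrix, and let β̂_λ be any minimizer of β ↦ (1/n)‖Y − Xβ‖₂² + λ‖β‖₁. If λ ≥ 2‖Xᵀε‖_∞ / n, then (1/n)‖X(β* − β̂_λ)‖₂² ≤ 2λ‖β*‖₁. -/
open MeasureTheory Matrix

/-- Lasso prediction bound: if λ ≥ 2‖Xᵀε‖_∞/n then (1/n)‖X(β*−β̂_λ)‖₂² ≤ 2λ‖β*‖₁. -/
theorem lasso_prediction_bound {n p : ℕ}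
    (X : Matrix (Fin n) (Fin p) ℝ) (βstar : Fin p → ℝ) (ε Y : Fin n → ℝ)
    (hY : Y = X.mulVec βstar + ε)
    (lam : ℝ) (βhat : Fin p → ℝ)
    (hmin : ∀ β : Fin p → ℝ,
      (1 / (n : ℝ)) * ∑ i, (Y i - X.mulVec βhat i) ^ 2 + lam * ∑ j, |βhat j|
        ≤ (1 / (n : ℝ)) * ∑ i, (Y i - X.mulVec β i) ^ 2 + lam * ∑ j, |β j|)
    (hlam : lam ≥ 2 * (⨆ j, |∑ i, X i j * ε i|) / (n : ℝ)) :
    (1 / (n : ℝ)) * ∑ i, (X.mulVec (βstar - βhat) i) ^ 2 ≤ 2 * lam * ∑ j, |βstar j| := by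
  classical
  set Δ : Fin p → ℝ := βstar - βhat with hΔ
  set c : Fin p → ℝ := fun j => ∑ i, X i j * ε i with hc
  set S : ℝ := ⨆ j, |∑ i, X i j * ε i| with hSdef
  set A : ℝ := ∑ i, (X.mulVec Δ i) ^ 2 with hA
  set T : ℝ := ∑ i, X.mulVec Δ i * ε i with hTdef
  set E : ℝ := ∑ i, (ε i) ^ 2 with hE
  set Bs : ℝ := ∑ j, |βstar j| with hBs
  set Bh : ℝ := ∑ j, |βhat j| with hBh
  set L1 : ℝ := ∑ j, |Δ j| with hL1
  have hS : ∀ j, |∑ i, X i j * ε i| ≤ S := fun j =>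
    le_ciSup (f := fun j => |∑ i, X i j * ε i|)
      (Set.Finite.bddAbove (Set.finite_range _)) j
  have hS0 : 0 ≤ S := by
    rcases isEmpty_or_nonempty (Fin p) with h | h
    · simp [hSdef, Real.iSup_of_isEmpty]
    · exact le_trans (abs_nonneg _) (hS (Classical.arbitrary _))
  have hL1nn : 0 ≤ L1 := Finset.sum_nonneg fun j _ => abs_nonneg _
  have hBsnn : 0 ≤ Bs := Finset.sum_nonneg fun j _ => abs_nonneg _
  have hL1le : L1 ≤ Bs + Bh := by
    rw [hL1, hBs, hBh, ← Finset.sum_add_distrib]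
    exact Finset.sum_le_sum fun j _ => abs_sub _ _
  -- swap sums
  have hT : T = ∑ j, Δ j * c j := by
    simp only [hTdef, hc, Matrix.mulVec, dotProduct, Finset.sum_mul,
      Finset.mul_sum]
    rw [Finset.sum_comm]
    exact Finset.sum_congr rfl fun j _ => Finset.sum_congr rfl fun i _ => by ring
  have habsT : |T| ≤ S * L1 := by
    rw [hT]
    calc |∑ j, Δ j * c j| ≤ ∑ j, |Δ j * c j| := Finset.abs_sum_le_sum_abs _ _
      _ = ∑ j, |Δ j| * |c j| := by simp [abs_mul]
      _ ≤ ∑ j, |Δ j| * S :=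
          Finset.sum_le_sum fun j _ => mul_le_mul_of_nonneg_left (by simpa [hc] using hS j) (abs_nonneg _)
      _ = S * L1 := by rw [hL1, ← Finset.sum_mul]; ring
  have hT2 : -T ≤ S * L1 := le_trans (neg_le_abs T) habsT
  -- nonnegativity of lam
  rcases Nat.eq_zero_or_pos n with hn0 | hnpos
  · subst hn0
    have hlamnn : 0 ≤ lam := by simpa using hlam
    have hnn : (0:ℝ) ≤ 2 * lam * Bs := by positivity
    have h0 : (1 / ((0:ℕ):ℝ)) = 0 := by norm_num
    rw [h0, zero_mul]
    exact hnn
  have hn : (0:ℝ) < n := by exact_mod_cast hnpos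
  have hlam2 : 2 * S ≤ lam * n := by
    rw [ge_iff_le, div_le_iff₀ hn] at hlam
    linarith [hlam]
  have hlamnn : 0 ≤ lam := by nlinarith [hS0, hn, hlam2]
  -- expand the minimality inequality at βstar
  have h1 := hmin βstar
  have hptA : ∀ i, (Y i - X.mulVec βhat i) ^ 2
      = (X.mulVec Δ i) ^ 2 + 2 * (X.mulVec Δ i * ε i) + (ε i) ^ 2 := by
    intro i
    have hmv : X.mulVec Δ i = X.mulVec βstar i - X.mulVec βhat i := by
      simp [hΔ, Matrix.mulVec_sub]
    rw [hY, hmv]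
    simp only [Pi.add_apply]
    ring
  have hptB : ∀ i, (Y i - X.mulVec βstar i) ^ 2 = (ε i) ^ 2 := by
    intro i; rw [hY]; simp
  have hsum1 : ∑ i, (Y i - X.mulVec βhat i) ^ 2 = A + 2 * T + E := by
    simp only [hptA]
    rw [Finset.sum_add_distrib, Finset.sum_add_distrib, ← Finset.mul_sum]
  have hsum2 : ∑ i, (Y i - X.mulVec βstar i) ^ 2 = E := by
    simp only [hptB, hE]
  rw [hsum1, hsum2] at h1
  -- h1 : (1/n)*(A+2T+E) + lam*Bh ≤ (1/n)*E + lam*Bs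
  have h3 : (A + 2 * T) / n ≤ lam * (Bs - Bh) := by
    have e : (A + 2 * T) / (n:ℝ)
        = (1 / (n:ℝ)) * (A + 2 * T + E) + lam * Bh - ((1 / (n:ℝ)) * E + lam * Bh) := by
      ring
    rw [e]
    linarith [h1]
  have h4 : A + 2 * T ≤ lam * (Bs - Bh) * n := (div_le_iff₀ hn).mp h3
  -- goal
  rw [one_div, inv_mul_le_iff₀ hn]
  show A ≤ (n:ℝ) * (2 * lam * Bs)
  have k1 : 2 * S * L1 ≤ lam * (n:ℝ) * L1 := mul_le_mul_of_nonneg_right hlam2 hL1nn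
  have k2 : lam * (n:ℝ) * L1 ≤ lam * (n:ℝ) * (Bs + Bh) :=
    mul_le_mul_of_nonneg_left hL1le (mul_nonneg hlamnn hn.le)
  nlinarith [h4, hT2, k1, k2, hS0, hL1nn]
end

section
/- Let W and W' be real random variables, let Π be a random variable whose CDF is within ε of that of W' in sup-norm (sup_t |P(W' ≤ t) − P(Π ≤ t)| ≤ ε) and which satisfies the anti-concentration bound sup_t P(|Π − t| ≤ c) ≤ a(c). If P(|W − W'| > c) ≤ η, then sup_{t∈ℝ} |P(W ≤ t) − P(W' ≤ t)| ≤ 2ε + a(c) + η. -/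
open MeasureTheory

/-- Comparison of distributions: if the CDF of Π is within ε of that of W' in
    sup-norm, Π satisfies the anti-concentration bound a(c), and W is within c of
    W' except with probability η, then the Kolmogorov distance between W and W'
    is at most 2ε + a(c) + η. -/
theorem kolmogorov_comparison {Ω : Type*} [MeasurableSpace Ω]
    (P : Measure Ω) [IsProbabilityMeasure P]
    (W W' Pi : Ω → ℝ) (ε η a c : ℝ) (hc : 0 < c)
    (h1 : ∀ t : ℝ, |(P {ω | W' ω ≤ t}).toReal - (P {ω | Pi ω ≤ t}).toReal| ≤ ε)
    (h2 : ∀ t : ℝ, (P {ω | |Pi ω - t| ≤ c}).toReal ≤ a)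
    (h3 : (P {ω | c < |W ω - W' ω|}).toReal ≤ η) :
    ∀ t : ℝ, |(P {ω | W ω ≤ t}).toReal - (P {ω | W' ω ≤ t}).toReal|
      ≤ 2 * ε + a + η := by
  intro t
  have aux : ∀ A B C : Set Ω, A ⊆ B ∪ C →
      (P A).toReal ≤ (P B).toReal + (P C).toReal := by
    intro A B C h
    have h1 : P A ≤ P B + P C := le_trans (measure_mono h) (measure_union_le _ _)
    have h2 := ENNReal.toReal_mono
      (by exact ENNReal.add_ne_top.mpr ⟨measure_ne_top _ _, measure_ne_top _ _⟩) h1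
    rwa [ENNReal.toReal_add (measure_ne_top _ _) (measure_ne_top _ _)] at h2
  have e1 := abs_le.mp (h1 t)
  have e2 := abs_le.mp (h1 (t + c))
  have e3 := abs_le.mp (h1 (t - c))
  -- upper bound: P(W ≤ t) ≤ P(W' ≤ t) + 2ε + a + η
  have s1 : {ω | W ω ≤ t} ⊆ {ω | W' ω ≤ t + c} ∪ {ω | c < |W ω - W' ω|} := by
    intro ω hω
    by_cases hb : c < |W ω - W' ω|
    · exact Or.inr hb
    · left
      have := abs_le.mp (not_lt.mp hb)
      simp only [Set.mem_setOf_eq] at hω ⊢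
      linarith [this.1]
  have s2 : {ω | Pi ω ≤ t + c} ⊆ {ω | Pi ω ≤ t} ∪ {ω | |Pi ω - (t + c)| ≤ c} := by
    intro ω hω
    by_cases hb : Pi ω ≤ t
    · exact Or.inl hb
    · right
      simp only [Set.mem_setOf_eq] at hω ⊢
      rw [abs_le]
      push_neg at hb
      constructor <;> linarith
  have u1 := aux _ _ _ s1
  have u2 := aux _ _ _ s2
  -- lower bound pieces
  have s3 : {ω | W' ω ≤ t - c} ⊆ {ω | W ω ≤ t} ∪ {ω | c < |W ω - W' ω|} := by
    intro ω hω
    by_cases hb : c < |W ω - W' ω|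
    · exact Or.inr hb
    · left
      have := abs_le.mp (not_lt.mp hb)
      simp only [Set.mem_setOf_eq] at hω ⊢
      linarith [this.2]
  have s4 : {ω | Pi ω ≤ t} ⊆ {ω | Pi ω ≤ t - c} ∪ {ω | |Pi ω - t| ≤ c} := by
    intro ω hω
    by_cases hb : Pi ω ≤ t - c
    · exact Or.inl hb
    · right
      simp only [Set.mem_setOf_eq] at hω ⊢
      rw [abs_le]
      push_neg at hb
      constructor <;> linarith
  have u3 := aux _ _ _ s3
  have u4 := aux _ _ _ s4
  have ha1 := h2 (t + c)
  have ha2 := h2 t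
  rw [abs_le]
  constructor <;> linarith
end
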